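/- arXiv:1611.02822 — 2 statements merged into one kernel-verified Lean document; each statement's English description precedes it below -/
import Mathlib

section
/- (Special case s = 1 of Anderson–Thakur) For A = F_q[θ] and any i ≥ 0, Σ_{a monic, deg a = i} 1/a = 1/L_i in F_q(θ), where L_0 = 1 and L_i = ∏_{j=1}^{i}(θ − θ^{q^j}). -/
open Polynomial

noncomputable section

/-- `L_0 = 1` and `L_i = ∏_{j=1}^{i} (θ - θ^{q^j})` in `A = F_q[θ]`. -/
def carlitzL (Fq : Type) [Field Fq] [Fintype Fq] (i : ℕ) : Polynomial Fq :=
  ∏ j ∈ Finset.Icc 1 i, ((X : Polynomial Fq) - X ^ (Fintype.card Fq) ^ j)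

namespace CarlitzAT

variable (Fq : Type) [Field Fq] [Fintype Fq]

local notation "q" => Fintype.card Fq

/-- The polynomial with coefficient vector `c`, of degree `< n`. -/
def vec {n : ℕ} (c : Fin n → Fq) : Polynomial Fq := ∑ i, monomial i.val (c i)

/-- The Moore matrix of powers `θ^{i q^j}`. -/
def Wmat (n : ℕ) : Matrix (Fin n) (Fin n) (Polynomial Fq) :=
  fun i j => X ^ (i.val * q ^ j.val)

def Δ (n : ℕ) : Polynomial Fq := (Wmat Fq n).det

/-- The Moore matrix with last row replaced by variables `x^{q^j}`. -/
def Nmat (n : ℕ) : Matrix (Fin (n+1)) (Fin (n+1)) (Polynomial (Polynomial Fq)) :=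
  fun i j => if i.val < n then C ((X : Polynomial Fq) ^ (i.val * q ^ j.val))
             else X ^ (q ^ j.val)

def Pp (n : ℕ) : Polynomial (Polynomial Fq) := (Nmat Fq n).det

/-- The subspace polynomial `∏_{deg b < n} (x - b)`. -/
def ee (n : ℕ) : Polynomial (Polynomial Fq) := ∏ c : Fin n → Fq, (X - C (vec Fq c))

lemma q_ge_two : 2 ≤ q := Fintype.one_lt_card

lemma vec_injective {n : ℕ} : Function.Injective (vec Fq (n := n)) := by
  intro a b h
  funext i
  have := congrArg (fun p => Polynomial.coeff p i.val) h
  simpa [vec, coeff_monomial, Finset.sum_ite_eq', Fin.val_eq_val] using this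

lemma Δ_eq (n : ℕ) :
    Δ Fq n = ∏ i : Fin n, ∏ j ∈ Finset.Ioi i,
      ((X : Polynomial Fq) ^ q ^ j.val - X ^ q ^ i.val) := by
  have : Wmat Fq n = Matrix.transpose (Matrix.vandermonde fun j : Fin n => (X : Polynomial Fq) ^ q ^ j.val) := by
    ext i j
    simp [Wmat, Matrix.vandermonde, Matrix.transpose, ← pow_mul, mul_comm]
  rw [Δ, this, Matrix.det_transpose, Matrix.det_vandermonde]

lemma Δ_ne_zero (n : ℕ) : Δ Fq n ≠ 0 := by
  rw [Δ_eq]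
  apply Finset.prod_ne_zero_iff.2
  intro i _
  apply Finset.prod_ne_zero_iff.2
  intro j hj
  have hij' : i < j := Finset.mem_Ioi.mp hj
  have hij : i.val < j.val := hij'
  intro h
  have h2 : ((X : Polynomial Fq) ^ q ^ j.val) = X ^ q ^ i.val := by
    rwa [sub_eq_zero] at h
  have := congrArg natDegree h2
  simp only [natDegree_X_pow] at this
  exact absurd (Nat.pow_right_injective (q_ge_two Fq) this) (by omega)



lemma carlitzL_eq (n : ℕ) :
    carlitzL Fq n = ∏ j : Fin n, ((X : Polynomial Fq) - X ^ q ^ (j.val + 1)) := by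
  induction n with
  | zero => simp [carlitzL]
  | succ n ih =>
    rw [carlitzL, Finset.prod_Icc_succ_top (by omega), ← carlitzL, ih, Fin.prod_univ_castSucc]
    simp

-- char p facts
lemma exists_char : ∃ p m : ℕ, p.Prime ∧ q = p ^ m ∧ 0 < m ∧ CharP Fq p := by
  obtain ⟨p, hc⟩ := CharP.exists Fq
  haveI := hc
  obtain ⟨m, hp, hq⟩ := FiniteField.card Fq p
  exact ⟨p, m, hp, hq, m.2, hc⟩



lemma sub_pow_q (a b : Polynomial Fq) : (a - b) ^ q = a ^ q - b ^ q := by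
  obtain ⟨p, m, hp, hq, hm, hc⟩ := exists_char Fq
  haveI := hc
  haveI : Fact p.Prime := ⟨hp⟩
  haveI : CharP (Polynomial Fq) p := Polynomial.instCharP p
  rw [hq]
  exact sub_pow_char_pow a b m

/-- `x ↦ x^q` as a ring hom on `Fq[θ]`. -/
lemma exists_frobq : ∃ φ : Polynomial Fq →+* Polynomial Fq, ∀ x, φ x = x ^ q := by
  obtain ⟨p, m, hp, hq, hm, hc⟩ := exists_char Fq
  haveI := hc
  haveI : Fact p.Prime := ⟨hp⟩
  haveI : CharP (Polynomial Fq) p := Polynomial.instCharP p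
  haveI : ExpChar (Polynomial Fq) p := ExpChar.prime hp
  exact ⟨iterateFrobenius (Polynomial Fq) p m, fun x => by rw [iterateFrobenius_def, ← hq]⟩



lemma Δ_succ (n : ℕ) :
    Δ Fq (n+1) = (-1) ^ n * (Δ Fq n) ^ q * carlitzL Fq n := by
  rw [Δ_eq, Fin.prod_univ_succ]
  have h0 : (∏ j ∈ Finset.Ioi (0 : Fin (n+1)),
        ((X : Polynomial Fq) ^ q ^ j.val - X ^ q ^ (0 : Fin (n+1)).val))
      = (-1) ^ n * carlitzL Fq n := by
    rw [Fin.prod_Ioi_zero, carlitzL_eq]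
    have : ∀ j : Fin n, (X : Polynomial Fq) ^ q ^ (j.succ).val - X ^ q ^ (0 : Fin (n+1)).val
        = (-1) * ((X : Polynomial Fq) - X ^ q ^ (j.val + 1)) := by
      intro j
      simp only [Fin.val_succ, Fin.val_zero, pow_zero, pow_one]
      ring
    rw [Finset.prod_congr rfl (fun j _ => this j), Finset.prod_mul_distrib]
    simp
  have h1 : (∏ i : Fin n, ∏ j ∈ Finset.Ioi i.succ,
        ((X : Polynomial Fq) ^ q ^ j.val - X ^ q ^ (i.succ).val))
      = (Δ Fq n) ^ q := by
    rw [Δ_eq, ← Finset.prod_pow]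
    refine Finset.prod_congr rfl fun i _ => ?_
    rw [Fin.prod_Ioi_succ, ← Finset.prod_pow]
    refine Finset.prod_congr rfl fun j hj => ?_
    rw [sub_pow_q]
    congr 1 <;> rw [Fin.val_succ, pow_succ, pow_mul]
  rw [h0, h1]
  ring


/-- The minor of the Moore matrix obtained by deleting the last row and column `j`. -/
def mm (n : ℕ) (j : Fin (n+1)) : Polynomial Fq :=
  Matrix.det (fun i k : Fin n => (X : Polynomial Fq) ^ (i.val * q ^ ((j.succAbove k).val)))

lemma Pp_eq_sum (n : ℕ) :
    Pp Fq n = ∑ j : Fin (n+1), C ((-1) ^ (n + j.val) * mm Fq n j) * X ^ (q ^ j.val) := by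
  rw [Pp, Matrix.det_succ_row _ (Fin.last n)]
  refine Finset.sum_congr rfl fun j _ => ?_
  have h1 : Nmat Fq n (Fin.last n) j = X ^ (q ^ j.val) := by
    simp [Nmat]
  have h2 : (Nmat Fq n).submatrix (Fin.last n).succAbove j.succAbove
      = (Matrix.of fun i k : Fin n =>
          (X : Polynomial Fq) ^ (i.val * q ^ ((j.succAbove k).val))).map
          (C : Polynomial Fq →+* Polynomial (Polynomial Fq)) := by
    ext i k
    simp [Nmat, Matrix.submatrix, Fin.succAbove_last, Fin.castSucc_lt_last i,
      (Fin.castSucc_lt_last i : i.castSucc < Fin.last n).ne]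
  rw [h1, h2, ← RingHom.mapMatrix_apply, ← RingHom.map_det]
  have h3 : (Fin.last n).val = n := rfl
  rw [h3]
  have : (Matrix.of fun i k : Fin n =>
      (X : Polynomial Fq) ^ (i.val * q ^ ((j.succAbove k).val))).det = mm Fq n j := rfl
  rw [this, map_mul, map_pow, map_neg, map_one]
  ring

lemma mm_last (n : ℕ) : mm Fq n (Fin.last n) = Δ Fq n := by
  unfold mm Δ Wmat
  congr 1
  ext i k
  simp [Fin.succAbove_last]

lemma Pp_coeff_top (n : ℕ) : (Pp Fq n).coeff (q ^ n) = Δ Fq n := by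
  rw [Pp_eq_sum, finset_sum_coeff]
  rw [Finset.sum_eq_single (Fin.last n)]
  · rw [coeff_C_mul, coeff_X_pow, mm_last]
    have : (Fin.last n).val = n := rfl
    rw [this, if_pos rfl, mul_one]
    have : (-1 : Polynomial Fq) ^ (n + n) = 1 := Even.neg_one_pow ⟨n, rfl⟩
    rw [this, one_mul]
  · intro j _ hj
    rw [coeff_C_mul, coeff_X_pow, if_neg, mul_zero]
    have hjn : j.val < n := Fin.val_lt_last hj
    have : q ^ j.val < q ^ n := Nat.pow_lt_pow_right (q_ge_two Fq) hjn
    omega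
  · intro h
    exact absurd (Finset.mem_univ _) h

lemma Pp_natDegree_le (n : ℕ) : (Pp Fq n).natDegree ≤ q ^ n := by
  rw [Pp_eq_sum]
  refine natDegree_sum_le_of_forall_le _ _ fun j _ => ?_
  refine le_trans (natDegree_C_mul_X_pow_le _ _) ?_
  exact Nat.pow_le_pow_right (by have := q_ge_two Fq; omega) (Fin.is_le j)

lemma Pp_ne_zero (n : ℕ) : Pp Fq n ≠ 0 := fun h => by
  have := Pp_coeff_top Fq n
  rw [h, coeff_zero] at this
  exact Δ_ne_zero Fq n this.symm

lemma Pp_natDegree (n : ℕ) : (Pp Fq n).natDegree = q ^ n := by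
  refine le_antisymm (Pp_natDegree_le Fq n) ?_
  refine le_natDegree_of_ne_zero ?_
  rw [Pp_coeff_top]
  exact Δ_ne_zero Fq n

lemma Pp_leadingCoeff (n : ℕ) : (Pp Fq n).leadingCoeff = Δ Fq n := by
  rw [leadingCoeff, Pp_natDegree, Pp_coeff_top]

lemma mm_zero (n : ℕ) : mm Fq n 0 = (Δ Fq n) ^ q := by
  obtain ⟨φ, hφ⟩ := exists_frobq Fq
  have h : (fun i k : Fin n =>
        (X : Polynomial Fq) ^ (i.val * q ^ (((0 : Fin (n+1)).succAbove k).val)))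
      = (Wmat Fq n).map φ := by
    ext i k
    simp only [Matrix.map_apply, Wmat, hφ, Fin.succAbove_zero, Fin.val_succ, ← pow_mul]
    congr 1
    rw [pow_succ]; ring
  rw [mm, h, ← RingHom.mapMatrix_apply, ← RingHom.map_det, hφ, Δ]

lemma cast_q_pow_eq_zero {j : ℕ} (hj : j ≠ 0) : ((q ^ j : ℕ) : Polynomial Fq) = 0 := by
  have h1 : ((q : ℕ) : Polynomial Fq) = C ((q : ℕ) : Fq) := (C_eq_natCast _).symm
  rw [Nat.cast_pow, h1, FiniteField.cast_card_eq_zero, map_zero, zero_pow hj]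

lemma Pp_derivative (n : ℕ) :
    derivative (Pp Fq n) = C ((-1) ^ n * (Δ Fq n) ^ q) := by
  rw [Pp_eq_sum, derivative_sum, Fin.sum_univ_succ]
  have h0 : derivative (C ((-1) ^ (n + ((0 : Fin (n+1))).val) * mm Fq n 0)
      * X ^ (q ^ ((0 : Fin (n+1))).val)) = C ((-1) ^ n * (Δ Fq n) ^ q) := by
    simp only [Fin.val_zero, pow_zero, pow_one, add_zero, derivative_C_mul, derivative_X,
      mul_one, mm_zero]
  have hs : ∀ j : Fin n, derivative (C ((-1) ^ (n + (j.succ).val) * mm Fq n j.succ)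
      * X ^ (q ^ (j.succ).val)) = 0 := by
    intro j
    rw [derivative_C_mul_X_pow, cast_q_pow_eq_zero Fq (by simp [Fin.val_succ]),
      mul_zero, map_zero, zero_mul]
  rw [h0, Finset.sum_congr rfl (fun j _ => hs j), Finset.sum_const, smul_zero, add_zero]

lemma Pp_eval (n : ℕ) :
    (Pp Fq n).eval ((X : Polynomial Fq) ^ n) = Δ Fq (n+1) := by
  rw [Pp, ← Polynomial.coe_evalRingHom, RingHom.map_det, Δ]
  congr 1
  refine Matrix.ext fun i j => ?_
  rw [RingHom.mapMatrix_apply, Matrix.map_apply]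
  by_cases h : i.val < n
  · simp [Nmat, Wmat, h]
  · have hi : i.val = n := by omega
    simp only [Nmat, Wmat]
    rw [if_neg h]
    simp only [coe_evalRingHom, eval_pow, eval_X, ← pow_mul, hi]

lemma exists_frobq_pow (j : ℕ) :
    ∃ φ : Polynomial Fq →+* Polynomial Fq, ∀ x, φ x = x ^ (q ^ j) := by
  obtain ⟨p, m, hp, hq, hm, hc⟩ := exists_char Fq
  haveI := hc
  haveI : Fact p.Prime := ⟨hp⟩
  haveI : CharP (Polynomial Fq) p := Polynomial.instCharP p
  haveI : ExpChar (Polynomial Fq) p := ExpChar.prime hp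
  refine ⟨iterateFrobenius (Polynomial Fq) p (m * j), fun x => ?_⟩
  rw [iterateFrobenius_def, pow_mul, ← hq]

lemma vec_pow_q_pow (n : ℕ) (c : Fin n → Fq) (j : ℕ) :
    (vec Fq c) ^ (q ^ j) = ∑ i : Fin n, C (c i) * X ^ (i.val * q ^ j) := by
  obtain ⟨φ, hφ⟩ := exists_frobq_pow Fq j
  rw [← hφ, vec, map_sum]
  refine Finset.sum_congr rfl fun i _ => ?_
  rw [hφ, monomial_pow, FiniteField.pow_card_pow, C_mul_X_pow_eq_monomial]

lemma Pp_eval_vec (n : ℕ) (c : Fin n → Fq) : (Pp Fq n).eval (vec Fq c) = 0 := by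
  rw [Pp, ← Polynomial.coe_evalRingHom, RingHom.map_det]
  set M : Matrix (Fin (n+1)) (Fin (n+1)) (Polynomial Fq) :=
    (evalRingHom (vec Fq c)).mapMatrix (Nmat Fq n) with hM
  set c' : Fin (n+1) → Polynomial Fq :=
    fun k => if h : k.val < n then C (c ⟨k.val, h⟩) else 0 with hc'
  have hrow : M (Fin.last n) = ∑ k, c' k • M k := by
    funext j
    have hlast : M (Fin.last n) j = (vec Fq c) ^ (q ^ j.val) := by
      simp only [hM, RingHom.mapMatrix_apply, Matrix.map_apply, Nmat]
      rw [if_neg (by simp)]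
      simp
    have hcast : ∀ k : Fin n, M k.castSucc j = (X : Polynomial Fq) ^ (k.val * q ^ j.val) := by
      intro k
      simp only [hM, RingHom.mapMatrix_apply, Matrix.map_apply, Nmat]
      rw [if_pos (by simpa using k.isLt)]
      simp
    rw [hlast, Finset.sum_apply, vec_pow_q_pow]
    rw [Fin.sum_univ_castSucc]
    have hl : (c' (Fin.last n) • M (Fin.last n)) j = 0 := by
      simp [hc']
    rw [hl, add_zero]
    refine Finset.sum_congr rfl fun k _ => ?_
    have : c' k.castSucc = C (c k) := by
      simp [hc', Fin.castSucc]
    rw [Pi.smul_apply, smul_eq_mul, this, hcast]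
  have h1 : (M.updateRow (Fin.last n) (∑ k, c' k • M k)).det = c' (Fin.last n) • M.det :=
    Matrix.det_updateRow_sum M (Fin.last n) c'
  rw [← hrow, Matrix.updateRow_eq_self] at h1
  rw [h1]
  simp [hc']

lemma ee_monic (n : ℕ) : (ee Fq n).Monic :=
  monic_prod_of_monic _ _ fun _ _ => monic_X_sub_C _

lemma ee_natDegree (n : ℕ) : (ee Fq n).natDegree = q ^ n := by
  rw [ee, natDegree_prod_of_monic _ _ fun _ _ => monic_X_sub_C _]
  simp [natDegree_X_sub_C, Fintype.card_fun]

lemma ee_dvd_Pp (n : ℕ) : ee Fq n ∣ Pp Fq n := by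
  have hsub : (Finset.univ.val.map (vec Fq (n := n))) ≤ (Pp Fq n).roots := by
    refine (Multiset.le_iff_subset (Multiset.Nodup.map (vec_injective Fq)
      Finset.univ.nodup)).2 ?_
    intro a ha
    obtain ⟨cc, _, rfl⟩ := Multiset.mem_map.1 ha
    rw [mem_roots (Pp_ne_zero Fq n)]
    exact Pp_eval_vec Fq n cc
  calc ee Fq n = ((Finset.univ.val.map (vec Fq (n := n))).map fun a => X - C a).prod := by
        rw [ee, Finset.prod, Multiset.map_map]
        rfl
    _ ∣ ((Pp Fq n).roots.map fun a => X - C a).prod :=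
        Multiset.prod_dvd_prod_of_le (Multiset.map_le_map hsub)
    _ ∣ Pp Fq n := prod_multiset_X_sub_C_dvd _

lemma Pp_eq_ee (n : ℕ) : Pp Fq n = ee Fq n * C (Δ Fq n) := by
  obtain ⟨g, hg⟩ := ee_dvd_Pp Fq n
  have hee : ee Fq n ≠ 0 := (ee_monic Fq n).ne_zero
  have hgn : g ≠ 0 := by
    rintro rfl
    exact Pp_ne_zero Fq n (by simp [hg])
  have hdeg : g.natDegree = 0 := by
    have h2 := Pp_natDegree Fq n
    rw [hg, natDegree_mul hee hgn, ee_natDegree] at h2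
    omega
  have hgC : g = C (g.coeff 0) := eq_C_of_natDegree_eq_zero hdeg
  have hlc : (Pp Fq n).leadingCoeff = g.coeff 0 := by
    rw [hg, leadingCoeff_mul, (ee_monic Fq n).leadingCoeff, one_mul, hgC]
    simp
  rw [hg, hgC, ← hlc, Pp_leadingCoeff]

/-- The product of all monic polynomials of degree `n`. -/
def Dn (n : ℕ) : Polynomial Fq := (ee Fq n).eval ((X : Polynomial Fq) ^ n)

/-- The numerator: sum of products of all but one monic polynomial of degree `n`. -/
def Nn (n : ℕ) : Polynomial Fq := (derivative (ee Fq n)).eval ((X : Polynomial Fq) ^ n)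

lemma Dn_mul (n : ℕ) : Dn Fq n * Δ Fq n = Δ Fq (n+1) := by
  rw [← Pp_eval, Pp_eq_ee, eval_mul, eval_C, Dn]

lemma Nn_mul (n : ℕ) : Nn Fq n * Δ Fq n = (-1) ^ n * (Δ Fq n) ^ q := by
  have h := Pp_derivative Fq n
  rw [Pp_eq_ee, derivative_mul, derivative_C, mul_zero, add_zero] at h
  have h2 := congrArg (fun p => Polynomial.eval ((X : Polynomial Fq) ^ n) p) h
  simpa [Nn] using h2

lemma key_identity (n : ℕ) : Nn Fq n * carlitzL Fq n = Dn Fq n := by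
  apply mul_right_cancel₀ (Δ_ne_zero Fq n)
  calc Nn Fq n * carlitzL Fq n * Δ Fq n
      = (Nn Fq n * Δ Fq n) * carlitzL Fq n := by ring
    _ = (-1) ^ n * (Δ Fq n) ^ q * carlitzL Fq n := by rw [Nn_mul]
    _ = Δ Fq (n+1) := (Δ_succ Fq n).symm
    _ = Dn Fq n * Δ Fq n := (Dn_mul Fq n).symm

lemma Dn_eq (n : ℕ) : Dn Fq n = ∏ c : Fin n → Fq, ((X : Polynomial Fq) ^ n - vec Fq c) := by
  rw [Dn, ee, eval_prod]
  simp

open scoped Classical in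
lemma Nn_eq (n : ℕ) : Nn Fq n
    = ∑ c : Fin n → Fq, ∏ c' ∈ Finset.univ.erase c, ((X : Polynomial Fq) ^ n - vec Fq c') := by
  rw [Nn, ee, Finset.prod, derivative_prod, ← Polynomial.coe_evalRingHom,
    map_multiset_sum (evalRingHom ((X : Polynomial Fq) ^ n)), Multiset.map_map]
  rw [Finset.sum]
  apply congrArg Multiset.sum
  apply Multiset.map_congr rfl
  intro c hc
  simp only [Function.comp_apply, coe_evalRingHom, derivative_sub, derivative_X, derivative_C,
    sub_zero, mul_one]
  rw [← Polynomial.coe_evalRingHom, map_multiset_prod, Multiset.map_map]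
  rw [Finset.prod, Finset.erase_val]
  apply congrArg Multiset.prod
  apply Multiset.map_congr rfl
  intro c' _
  simp

lemma vec_degree_lt (n : ℕ) (c : Fin n → Fq) : (vec Fq c).degree < (n : ℕ) := by
  apply lt_of_le_of_lt (degree_sum_le _ _)
  refine (Finset.sup_lt_iff ?_).2 ?_
  · exact WithBot.bot_lt_coe n
  intro i _
  exact lt_of_le_of_lt (degree_monomial_le _ _) (by exact_mod_cast i.isLt)

lemma monic_aux (n : ℕ) (c : Fin n → Fq) : ((X : Polynomial Fq) ^ n - vec Fq c).Monic :=
  monic_X_pow_sub (by simpa using vec_degree_lt Fq n c)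

lemma natDegree_aux (n : ℕ) (c : Fin n → Fq) :
    ((X : Polynomial Fq) ^ n - vec Fq c).natDegree = n := by
  have hd : ((X : Polynomial Fq) ^ n - vec Fq c).degree = n := by
    rw [degree_sub_eq_left_of_degree_lt]
    · exact degree_X_pow n
    · rw [degree_X_pow]
      exact vec_degree_lt Fq n c
  exact natDegree_eq_of_degree_eq_some hd

lemma aux_injective (n : ℕ) :
    Function.Injective (fun c : Fin n → Fq => (X : Polynomial Fq) ^ n - vec Fq c) := by
  intro a b h
  exact vec_injective Fq (by simpa using sub_right_injective h)

open scoped Classical in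
lemma monic_set_eq (n : ℕ) :
    {a : Polynomial Fq | a.Monic ∧ a.natDegree = n}
      = ↑(Finset.univ.image fun c : Fin n → Fq => (X : Polynomial Fq) ^ n - vec Fq c) := by
  ext a
  simp only [Set.mem_setOf_eq, Finset.coe_image, Set.mem_image, Finset.mem_coe,
    Finset.mem_univ, true_and, Finset.coe_univ, Set.image_univ, Set.mem_range]
  constructor
  · rintro ⟨hm, hd⟩
    refine ⟨fun i => -(a.coeff i.val), ?_⟩
    have has : a = X ^ n + ∑ i ∈ Finset.range n, C (a.coeff i) * X ^ i := by
      have := hm.as_sum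
      rwa [hd] at this
    have hvec : vec Fq (fun i : Fin n => -(a.coeff i.val))
        = -∑ i : Fin n, monomial i.val (a.coeff i.val) := by
      rw [vec, ← Finset.sum_neg_distrib]
      exact Finset.sum_congr rfl fun i _ => by rw [map_neg]
    rw [hvec, sub_neg_eq_add]
    rw [Fin.sum_univ_eq_sum_range (fun i => monomial i (a.coeff i)) n]
    have hmon : ∑ i ∈ Finset.range n, monomial i (a.coeff i)
        = ∑ i ∈ Finset.range n, C (a.coeff i) * X ^ i :=
      Finset.sum_congr rfl fun i _ => (C_mul_X_pow_eq_monomial).symm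
    rw [hmon, ← has]
  · rintro ⟨c, rfl⟩
    exact ⟨monic_aux Fq n c, natDegree_aux Fq n c⟩

lemma sum_inv_eq {K : Type} [Field K] {ι : Type} [Fintype ι] [DecidableEq ι]
    (u : ι → K) (hu : ∀ i, u i ≠ 0) :
    ∑ i, (u i)⁻¹ = (∑ i, ∏ j ∈ Finset.univ.erase i, u j) / ∏ j, u j := by
  rw [eq_div_iff (Finset.prod_ne_zero_iff.2 fun j _ => hu j), Finset.sum_mul]
  refine Finset.sum_congr rfl fun i _ => ?_
  rw [← Finset.mul_prod_erase Finset.univ u (Finset.mem_univ i), inv_mul_cancel_left₀ (hu i)]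

end CarlitzAT

/-- For any `i ≥ 0`, `Σ_{a monic, deg a = i} 1/a = 1/L_i` in `F_q(θ)`. -/
theorem sum_inv_monic_eq_inv_carlitzL (Fq : Type) [Field Fq] [Fintype Fq] (i : ℕ) :
    (∑ᶠ a ∈ {a : Polynomial Fq | a.Monic ∧ a.natDegree = i},
        (algebraMap (Polynomial Fq) (RatFunc Fq) a)⁻¹) =
      (algebraMap (Polynomial Fq) (RatFunc Fq) (carlitzL Fq i))⁻¹ := by
  classical
  set φ := algebraMap (Polynomial Fq) (RatFunc Fq) with hφdef
  have hφ : Function.Injective φ := RatFunc.algebraMap_injective Fq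
  rw [CarlitzAT.monic_set_eq Fq i, finsum_mem_coe_finset,
    Finset.sum_image (fun a _ b _ h => CarlitzAT.aux_injective Fq i h)]
  have hu : ∀ c : Fin i → Fq, φ ((X : Polynomial Fq) ^ i - CarlitzAT.vec Fq c) ≠ 0 := by
    intro c h
    exact (CarlitzAT.monic_aux Fq i c).ne_zero (hφ (by rw [h, map_zero]))
  rw [CarlitzAT.sum_inv_eq (fun c : Fin i → Fq =>
    φ ((X : Polynomial Fq) ^ i - CarlitzAT.vec Fq c)) hu]
  have hN : (∑ c : Fin i → Fq, ∏ c' ∈ Finset.univ.erase c,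
      φ ((X : Polynomial Fq) ^ i - CarlitzAT.vec Fq c')) = φ (CarlitzAT.Nn Fq i) := by
    rw [CarlitzAT.Nn_eq, map_sum]
    exact Finset.sum_congr rfl fun c _ => (map_prod φ _ _).symm
  have hD : (∏ c : Fin i → Fq, φ ((X : Polynomial Fq) ^ i - CarlitzAT.vec Fq c))
      = φ (CarlitzAT.Dn Fq i) := by
    rw [CarlitzAT.Dn_eq, map_prod]
  rw [hN, hD]
  have hDn : CarlitzAT.Dn Fq i ≠ 0 := by
    rw [CarlitzAT.Dn_eq]
    exact Finset.prod_ne_zero_iff.2 fun c _ => (CarlitzAT.monic_aux Fq i c).ne_zero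
  have hkey := CarlitzAT.key_identity Fq i
  have hNn : CarlitzAT.Nn Fq i ≠ 0 := fun h => hDn (by rw [← hkey, h, zero_mul])
  rw [← hkey, map_mul]
  exact div_mul_cancel_left₀ (fun h => hNn (hφ (by rw [h, map_zero]))) _
end
end

section
/- (Finite sum–product product formula, P-component of Prop. on the FMZV algebra) Let P ∈ A = F_q[θ] be monic irreducible with d := deg P. For tuples s ∈ ℕ^r and s' ∈ ℕ^{r'}, the product S_{<d}(s)·S_{<d}(s') is an F_p-linear combination Σ_i f_i S_{<d}(s_i) of truncated sums S_{<d}(s_i) with wt(s_i) = wt(s) + wt(s'), where the tuples s_i and coefficients f_i ∈ F_p depend only on s, s' (not on d or P). Here S_{<d}(t_1,…,t_l) := Σ_{d > deg a_1 > ⋯ > deg a_l, a_j monic} ∏ a_j^{−t_j} ∈ F_q(θ) and wt(t_1,…,t_l) := t_1 + ⋯ + t_l. -/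
open Polynomial

noncomputable section

/-- The truncated multiple zeta sum `S_{<d}(s_1,…,s_r)`: the sum over tuples of monic
polynomials `a_1, …, a_r ∈ F_q[θ]` with `d > deg a_1 > ⋯ > deg a_r` of `∏ a_j^{-s_j}`. -/
def Sd (Fq : Type) [Field Fq] [Fintype Fq] (d : ℕ) {r : ℕ} (s : Fin r → ℕ) : RatFunc Fq :=
  ∑ᶠ a ∈ {a : Fin r → Polynomial Fq |
      (∀ l, (a l).Monic) ∧ (∀ l l', l < l' → (a l').natDegree < (a l).natDegree) ∧
      (∀ l, (a l).natDegree < d)},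
    ∏ l, (algebraMap (Polynomial Fq) (RatFunc Fq) (a l))⁻¹ ^ s l

/-!
Peeling off the polynomial of largest degree gives `S_{<d}(a, u) = ∑_{e < d} P_e(a) S_{<e}(u)`,
where `P_e(a)` is the sum of `f⁻ᵃ` over monic `f` of degree `e`. Multiplying two such sums over
`e < d` produces two terms of the same shape and the diagonal
`∑_{e < d} P_e(a) P_e(b) S_{<e}(u) S_{<e}(v)`. Writing a pair of monics of degree `e` as
`(f, f + z)` with `deg z < e`, iterated partial fractions
`1 / (f (f + z)) = (1 / f - 1 / (f + z)) / z` show that `P_e(a) P_e(b) - P_e(a + b)` is a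
`ℤ`-combination of `P_e(i) ∑_{deg z < e} z⁻ʲ` with `i + j = a + b`; sorting `z ≠ 0` by degree
and leading coefficient turns `∑_{deg z < e} z⁻ʲ` into `(∑_{u ∈ F_qˣ} uʲ) S_{<e}(j)`, and that
coefficient is `0` or `-1`. So, by induction on the total weight, the product of elements of
weights `w₁` and `w₂` of the `ℤ`-span of the sequences `d ↦ S_{<d}(s)` lies in the span of
weight `w₁ + w₂`; in characteristic `p` the integer coefficients may be reduced modulo `p`.
-/

open Finset

lemma Fin.strictAnti_cons {α : Type*} [Preorder α] {n : ℕ} {f : Fin n → α} {a : α} :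
    StrictAnti (Fin.cons a f : Fin (n + 1) → α) ↔ (∀ j, f j < a) ∧ StrictAnti f :=
  Fin.liftFun_cons (· > ·)

lemma Submodule.mul_mem_of_mem_span_of_mem_span {R A : Type*} [CommSemiring R] [Semiring A]
    [Module R A] [IsScalarTower R A A] [SMulCommClass R A A] {S T : Set A} {P : Submodule R A}
    (h : ∀ s ∈ S, ∀ t ∈ T, s * t ∈ P) {x y : A} (hx : x ∈ span R S) (hy : y ∈ span R T) :
    x * y ∈ P := by
  induction hx using span_induction with
  | mem s hs =>
    induction hy using span_induction with
    | mem t ht => exact h s hs t ht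
    | zero => simp
    | add t t' _ _ ht ht' => simpa [mul_add] using P.add_mem ht ht'
    | smul c t _ ht => simpa [mul_smul_comm] using P.smul_mem c ht
  | zero => simp
  | add s s' _ _ hs hs' => simpa [add_mul] using P.add_mem hs hs'
  | smul c s _ hs => simpa [smul_mul_assoc] using P.smul_mem c hs

namespace TruncatedMZV

lemma inv_pow_mul_inv_add_pow_mul_inv_pow {K : Type*} [Field K] {x z : K} (hx : x ≠ 0)
    (hxz : x + z ≠ 0) (hz : z ≠ 0) (a b c : ℕ) :
    x⁻¹ ^ (a + 1) * (x + z)⁻¹ ^ (b + 1) * z⁻¹ ^ c =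
      x⁻¹ ^ (a + 1) * (x + z)⁻¹ ^ b * z⁻¹ ^ (c + 1) -
        x⁻¹ ^ a * (x + z)⁻¹ ^ (b + 1) * z⁻¹ ^ (c + 1) := by
  have hsub : x⁻¹ - (x + z)⁻¹ = z * x⁻¹ * (x + z)⁻¹ := by
    rw [inv_sub_inv hx hxz]
    field_simp
    ring
  have hzz : z * z⁻¹ = 1 := mul_inv_cancel₀ hz
  linear_combination (-(x⁻¹ ^ a * (x + z)⁻¹ ^ b * z⁻¹ ^ (c + 1))) * hsub
    - (x⁻¹ ^ (a + 1) * (x + z)⁻¹ ^ (b + 1) * z⁻¹ ^ c) * hzz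

lemma sum_eq_add_sum_units {G₀ M : Type*} [GroupWithZero G₀] [Fintype G₀] [DecidableEq G₀]
    [AddCommMonoid M] (f : G₀ → M) : ∑ c, f c = f 0 + ∑ u : G₀ˣ, f u := by
  rw [Fintype.sum_eq_add_sum_compl 0]
  congr 1
  symm
  exact sum_bij (fun u _ => (u : G₀)) (fun u _ => by simp) (fun u _ v _ h => Units.val_injective h)
    (fun c hc => ⟨Units.mk0 c (by simpa using hc), mem_univ _, rfl⟩) fun _ _ => rfl

section PartialSum

variable {M : Type*} [AddCommMonoid M]

def partialSum (F : ℕ → M) (d : ℕ) : M := ∑ e ∈ range d, F e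

lemma partialSum_apply (F : ℕ → M) (d : ℕ) : partialSum F d = ∑ e ∈ range d, F e := rfl

@[simp]
lemma partialSum_zero : partialSum (0 : ℕ → M) = 0 :=
  funext fun _ => sum_const_zero

@[simp]
lemma partialSum_add (F G : ℕ → M) : partialSum (F + G) = partialSum F + partialSum G :=
  funext fun _ => sum_add_distrib

@[simp]
lemma partialSum_smul {R : Type*} [Monoid R] [DistribMulAction R M] (c : R) (F : ℕ → M) :
    partialSum (c • F) = c • partialSum F :=
  funext fun _ => (smul_sum ..).symm

lemma partialSum_mul_partialSum {R : Type*} [CommRing R] (F G : ℕ → R) :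
    partialSum F * partialSum G = partialSum (partialSum F * G + F * partialSum G + F * G) := by
  funext d
  induction d with
  | zero => simp [partialSum_apply]
  | succ d ih =>
    simp only [Pi.mul_apply, Pi.add_apply, partialSum_apply, sum_range_succ] at ih ⊢
    linear_combination ih

end PartialSum

section Parametrization

variable {R : Type*} [CommRing R]

variable (R) in
def lowPoly (e : ℕ) : (Fin e → R) →ₗ[R] R[X] :=
  (degreeLT R e).subtype ∘ₗ (degreeLTEquiv R e).symm.toLinearMap

lemma lowPoly_apply {e : ℕ} (v : Fin e → R) : lowPoly R e v = ∑ i, C (v i) * X ^ (i : ℕ) := by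
  simp [lowPoly, degreeLTEquiv, C_mul_X_pow_eq_monomial]

lemma lowPoly_injective (e : ℕ) : Function.Injective (lowPoly R e) :=
  Subtype.val_injective.comp (degreeLTEquiv R e).symm.injective

lemma degree_lowPoly_lt {e : ℕ} (v : Fin e → R) : (lowPoly R e v).degree < e :=
  mem_degreeLT.1 ((degreeLTEquiv R e).symm v).2

lemma exists_lowPoly_eq {e : ℕ} {g : R[X]} (hg : g.degree < e) : ∃ v, lowPoly R e v = g :=
  ⟨degreeLTEquiv R e ⟨g, mem_degreeLT.2 hg⟩, by simp [lowPoly]⟩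

lemma lowPoly_snoc {e : ℕ} (v : Fin e → R) (c : R) :
    lowPoly R (e + 1) (Fin.snoc v c) = lowPoly R e v + C c * X ^ e := by
  simp [lowPoly_apply, Fin.sum_univ_castSucc]

variable (R) in
def monicPoly (e : ℕ) (v : Fin e → R) : R[X] := X ^ e + lowPoly R e v

lemma monicPoly_monic {e : ℕ} (v : Fin e → R) : (monicPoly R e v).Monic :=
  monic_X_pow_add (degree_lowPoly_lt v)

lemma natDegree_monicPoly [Nontrivial R] {e : ℕ} (v : Fin e → R) :
    (monicPoly R e v).natDegree = e := by
  rw [monicPoly, natDegree_add_eq_left_of_degree_lt, natDegree_X_pow]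
  simpa using degree_lowPoly_lt v

lemma monicPoly_injective (e : ℕ) : Function.Injective (monicPoly R e) :=
  fun _ _ h => lowPoly_injective e (add_left_cancel h)

lemma monicPoly_add_lowPoly {e : ℕ} (v w : Fin e → R) :
    monicPoly R e v + lowPoly R e w = monicPoly R e (v + w) := by
  rw [monicPoly, monicPoly, map_add, add_assoc]

lemma exists_monicPoly_eq {e : ℕ} {f : R[X]} (hf : f.Monic) (he : f.natDegree = e) :
    ∃ v, monicPoly R e v = f := by
  nontriviality R
  have hdeg : f.degree = e := by rw [degree_eq_natDegree hf.ne_zero, he]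
  obtain ⟨v, hv⟩ := exists_lowPoly_eq (e := e) (g := f - X ^ e) <| by
    simpa [hdeg] using degree_sub_lt_left (by rw [hdeg, degree_X_pow]) hf.ne_zero
      (by rw [hf.leadingCoeff, leadingCoeff_X_pow])
  exact ⟨v, by rw [monicPoly, hv, add_sub_cancel]⟩

lemma lowPoly_add_C_mul_X_pow {e : ℕ} (u : Rˣ) (v : Fin e → R) :
    lowPoly R e v + C (↑u⁻¹ : R) * X ^ e = C (↑u⁻¹ : R) * monicPoly R e (u • v) := by
  rw [monicPoly, Units.smul_def, map_smul, smul_eq_C_mul, mul_add, ← mul_assoc, ← C_mul,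
    Units.inv_mul, C_1, one_mul, add_comm]

end Parametrization

variable {Fq : Type} [Field Fq]

local notation "ι" => algebraMap Fq[X] (RatFunc Fq)

lemma algebraMap_monicPoly_ne_zero {e : ℕ} (v : Fin e → Fq) : ι (monicPoly Fq e v) ≠ 0 :=
  RatFunc.algebraMap_ne_zero (monicPoly_monic v).ne_zero

lemma algebraMap_lowPoly_ne_zero {e : ℕ} {w : Fin e → Fq} (hw : w ≠ 0) :
    ι (lowPoly Fq e w) ≠ 0 :=
  RatFunc.algebraMap_ne_zero fun h => hw (lowPoly_injective e (h.trans (map_zero _).symm))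

lemma algebraMap_monicPoly_add {e : ℕ} (v w : Fin e → Fq) :
    ι (monicPoly Fq e (v + w)) = ι (monicPoly Fq e v) + ι (lowPoly Fq e w) := by
  rw [← map_add, monicPoly_add_lowPoly]

variable [Fintype Fq]

variable (Fq) in
def powerSum (k e : ℕ) : RatFunc Fq := ∑ v : Fin e → Fq, (ι (monicPoly Fq e v))⁻¹ ^ k

variable (Fq) in
open scoped Classical in
def monicsDegLT (d : ℕ) : Finset Fq[X] := (range d).biUnion fun e => univ.image (monicPoly Fq e)

lemma mem_monicsDegLT {d : ℕ} {f : Fq[X]} :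
    f ∈ monicsDegLT Fq d ↔ f.Monic ∧ f.natDegree < d := by
  simp only [monicsDegLT, mem_biUnion, mem_range, mem_image, mem_univ, true_and]
  constructor
  · rintro ⟨e, he, v, rfl⟩
    exact ⟨monicPoly_monic v, (natDegree_monicPoly v).trans_lt he⟩
  · rintro ⟨hf, hd⟩
    exact ⟨_, hd, exists_monicPoly_eq hf rfl⟩

lemma sum_monicsDegLT {M : Type*} [AddCommMonoid M] (d : ℕ) (F : Fq[X] → M) :
    ∑ f ∈ monicsDegLT Fq d, F f = ∑ e ∈ range d, ∑ v : Fin e → Fq, F (monicPoly Fq e v) := by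
  classical
  rw [monicsDegLT, sum_biUnion]
  · exact sum_congr rfl fun e _ => sum_image fun v _ w _ h => monicPoly_injective e h
  · intro e _ e' _ hne
    simp only [Function.onFun, disjoint_left, mem_image, mem_univ, true_and]
    rintro _ ⟨v, rfl⟩ ⟨w, hw⟩
    exact hne (by rw [← natDegree_monicPoly v, ← hw, natDegree_monicPoly])

variable (Fq) in
open scoped Classical in
def decreasingMonics (r d : ℕ) : Finset (Fin r → Fq[X]) :=
  (Fintype.piFinset fun _ => monicsDegLT Fq d).filter fun a => StrictAnti (natDegree ∘ a)

lemma mem_decreasingMonics {r d : ℕ} {a : Fin r → Fq[X]} :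
    a ∈ decreasingMonics Fq r d ↔
      (∀ l, (a l).Monic) ∧ StrictAnti (natDegree ∘ a) ∧ ∀ l, (a l).natDegree < d := by
  simp only [decreasingMonics, mem_filter, Fintype.mem_piFinset, mem_monicsDegLT, forall_and]
  tauto

lemma cons_mem_decreasingMonics {r d : ℕ} {f : Fq[X]} {a : Fin r → Fq[X]} :
    Fin.cons f a ∈ decreasingMonics Fq (r + 1) d ↔
      f ∈ monicsDegLT Fq d ∧ a ∈ decreasingMonics Fq r f.natDegree := by
  simp only [mem_decreasingMonics, mem_monicsDegLT, Fin.comp_cons, Fin.forall_fin_succ,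
    Fin.cons_zero, Fin.cons_succ, Fin.strictAnti_cons]
  constructor
  · rintro ⟨⟨hf, ha⟩, ⟨hlt, hanti⟩, hfd, -⟩
    exact ⟨⟨hf, hfd⟩, ha, hanti, hlt⟩
  · rintro ⟨⟨hf, hfd⟩, ha, hanti, hlt⟩
    exact ⟨⟨hf, ha⟩, ⟨hlt, hanti⟩, hfd, fun l => (hlt l).trans hfd⟩

lemma Sd_eq_sum (d : ℕ) {r : ℕ} (s : Fin r → ℕ) :
    Sd Fq d s = ∑ a ∈ decreasingMonics Fq r d, ∏ l, (ι (a l))⁻¹ ^ s l := by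
  rw [Sd, ← finsum_mem_coe_finset]
  congr 1
  ext a
  simp only [Set.mem_ofPred_eq, mem_coe, mem_decreasingMonics]
  rfl

lemma Sd_of_length_zero (d : ℕ) (s : Fin 0 → ℕ) : Sd Fq d s = 1 := by
  simp [Sd_eq_sum, decreasingMonics, Subsingleton.strictAnti]

lemma Sd_cons (d k : ℕ) {r : ℕ} (s : Fin r → ℕ) :
    Sd Fq d (Fin.cons k s : Fin (r + 1) → ℕ) = ∑ e ∈ range d, powerSum Fq k e * Sd Fq e s := by
  have hsplit : Sd Fq d (Fin.cons k s : Fin (r + 1) → ℕ) =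
      ∑ x ∈ (monicsDegLT Fq d).sigma fun f => decreasingMonics Fq r f.natDegree,
        (ι x.1)⁻¹ ^ k * ∏ l, (ι (x.2 l))⁻¹ ^ s l := by
    rw [Sd_eq_sum]
    refine sum_nbij' (fun a => ⟨a 0, Fin.tail a⟩) (fun x => Fin.cons x.1 x.2) ?_ ?_ ?_ ?_ ?_
    · intro a ha
      rw [← Fin.cons_self_tail a, cons_mem_decreasingMonics] at ha
      exact mem_sigma.2 ha
    · intro x hx
      exact cons_mem_decreasingMonics.2 (mem_sigma.1 hx)
    · intro a _
      exact Fin.cons_self_tail a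
    · intro x _
      simp
    · intro a _
      rw [Fin.prod_univ_succ]
      rfl
  rw [hsplit, sum_sigma, sum_monicsDegLT]
  refine sum_congr rfl fun e _ => ?_
  rw [powerSum, sum_mul]
  refine sum_congr rfl fun v _ => ?_
  rw [natDegree_monicPoly, Sd_eq_sum, mul_sum]

-- The term `w = 0` is `0⁻¹ ^ k`, which vanishes for `k ≠ 0`.
variable (Fq) in
def lowSum (k e : ℕ) : RatFunc Fq := ∑ w : Fin e → Fq, (ι (lowPoly Fq e w))⁻¹ ^ k

variable (Fq) in
def mixedSum (a b c e : ℕ) : RatFunc Fq :=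
  ∑ v : Fin e → Fq, ∑ w : Fin e → Fq,
    (ι (monicPoly Fq e v))⁻¹ ^ a * (ι (monicPoly Fq e (v + w)))⁻¹ ^ b * (ι (lowPoly Fq e w))⁻¹ ^ c

lemma mixedSum_succ_succ (a b c e : ℕ) :
    mixedSum Fq (a + 1) (b + 1) (c + 1) e =
      mixedSum Fq (a + 1) b (c + 2) e - mixedSum Fq a (b + 1) (c + 2) e := by
  simp only [mixedSum, ← sum_sub_distrib]
  refine sum_congr rfl fun v _ => sum_congr rfl fun w _ => ?_
  rcases eq_or_ne w 0 with rfl | hw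
  · simp
  · rw [algebraMap_monicPoly_add]
    exact inv_pow_mul_inv_add_pow_mul_inv_pow (algebraMap_monicPoly_ne_zero v)
      (algebraMap_monicPoly_add v w ▸ algebraMap_monicPoly_ne_zero (v + w))
      (algebraMap_lowPoly_ne_zero hw) a b (c + 1)

lemma mixedSum_zero_left (b c e : ℕ) :
    mixedSum Fq 0 b c e = powerSum Fq b e * lowSum Fq c e := by
  rw [mixedSum, sum_comm, powerSum, lowSum, mul_comm, sum_mul_sum]
  refine sum_congr rfl fun w _ => ?_
  exact Fintype.sum_equiv (Equiv.addRight w) _ _ fun v => by rw [pow_zero, one_mul, mul_comm]; rfl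

lemma mixedSum_zero_middle (a c e : ℕ) :
    mixedSum Fq a 0 c e = powerSum Fq a e * lowSum Fq c e := by
  simp [mixedSum, powerSum, lowSum, sum_mul_sum]

lemma powerSum_mul_powerSum (a b e : ℕ) :
    powerSum Fq (a + 1) e * powerSum Fq (b + 1) e + mixedSum Fq a (b + 1) 1 e =
      powerSum Fq (a + b + 2) e + mixedSum Fq (a + 1) b 1 e := by
  classical
  have hdiag : powerSum Fq (a + b + 2) e = ∑ v : Fin e → Fq, ∑ w : Fin e → Fq,
      if w = 0 then (ι (monicPoly Fq e v))⁻¹ ^ (a + b + 2) else 0 := by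
    simp [powerSum]
  have hprod : powerSum Fq (a + 1) e * powerSum Fq (b + 1) e =
      ∑ v : Fin e → Fq, ∑ w : Fin e → Fq,
        (ι (monicPoly Fq e v))⁻¹ ^ (a + 1) * (ι (monicPoly Fq e (v + w)))⁻¹ ^ (b + 1) := by
    rw [powerSum, powerSum, sum_mul_sum]
    exact sum_congr rfl fun v _ => (Fintype.sum_equiv (Equiv.addLeft v) _ _ fun w => rfl).symm
  rw [hdiag, hprod, mixedSum, mixedSum, ← sum_add_distrib, ← sum_add_distrib]
  refine sum_congr rfl fun v _ => ?_
  rw [← sum_add_distrib, ← sum_add_distrib]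
  refine sum_congr rfl fun w _ => ?_
  rcases eq_or_ne w 0 with rfl | hw
  · simp [pow_add]
    ring
  · rw [if_neg hw, zero_add, algebraMap_monicPoly_add]
    have := inv_pow_mul_inv_add_pow_mul_inv_pow (algebraMap_monicPoly_ne_zero v)
      (algebraMap_monicPoly_add v w ▸ algebraMap_monicPoly_ne_zero (v + w))
      (algebraMap_lowPoly_ne_zero hw) a b 0
    rw [pow_zero, mul_one, zero_add] at this
    rw [this]
    ring

lemma lowSum_succ [DecidableEq Fq] (k e : ℕ) :
    lowSum Fq k (e + 1) =
      lowSum Fq k e + algebraMap Fq (RatFunc Fq) (∑ u : Fqˣ, (u : Fq) ^ k) * powerSum Fq k e := by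
  rw [lowSum, ← Fintype.sum_equiv (Fin.snocEquiv fun _ => Fq)
    (fun p => (ι (lowPoly Fq (e + 1) (Fin.snoc p.2 p.1)))⁻¹ ^ k) _ fun _ => rfl,
    Fintype.sum_prod_type, sum_eq_add_sum_units, ← Equiv.sum_comp (Equiv.inv Fqˣ)]
  simp only [lowPoly_snoc, map_zero, zero_mul, add_zero]
  congr 1
  rw [map_sum, sum_mul]
  refine sum_congr rfl fun u _ => ?_
  simp only [Equiv.inv_apply, lowPoly_add_C_mul_X_pow, map_mul, mul_inv, mul_pow, ← mul_sum]
  congr 1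
  · simp [RatFunc.algebraMap_C]
  · exact Fintype.sum_bijective _ (MulAction.bijective u) _ _ fun v => rfl

lemma lowSum_eq [DecidableEq Fq] {k : ℕ} (hk : k ≠ 0) (e : ℕ) :
    lowSum Fq k e =
      algebraMap Fq (RatFunc Fq) (∑ u : Fqˣ, (u : Fq) ^ k) * ∑ t ∈ range e, powerSum Fq k t := by
  induction e with
  | zero => simp [lowSum, hk, lowPoly_apply]
  | succ e ih => rw [lowSum_succ, ih, sum_range_succ, mul_add]

variable (Fq) in
def sdSeq {r : ℕ} (s : Fin r → ℕ) (d : ℕ) : RatFunc Fq := Sd Fq d s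

lemma sdSeq_cons (k : ℕ) {r : ℕ} (s : Fin r → ℕ) :
    sdSeq Fq (Fin.cons k s : Fin (r + 1) → ℕ) = partialSum (powerSum Fq k * sdSeq Fq s) :=
  funext fun d => Sd_cons d k s

lemma sdSeq_of_length_zero (s : Fin 0 → ℕ) : sdSeq Fq s = 1 :=
  funext fun d => Sd_of_length_zero d s

lemma sdSeq_singleton (k : ℕ) : sdSeq Fq ![k] = partialSum (powerSum Fq k) := by
  rw [← mul_one (powerSum Fq k), ← sdSeq_of_length_zero ![], ← sdSeq_cons]
  rfl

lemma sdSeq_cons_mul_sdSeq_cons (a b : ℕ) {r r' : ℕ} (u : Fin r → ℕ) (v : Fin r' → ℕ) :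
    sdSeq Fq (Fin.cons a u : Fin (r + 1) → ℕ) * sdSeq Fq (Fin.cons b v : Fin (r' + 1) → ℕ) =
      partialSum (powerSum Fq b * (sdSeq Fq (Fin.cons a u : Fin (r + 1) → ℕ) * sdSeq Fq v)) +
      partialSum (powerSum Fq a * (sdSeq Fq u * sdSeq Fq (Fin.cons b v : Fin (r' + 1) → ℕ))) +
      partialSum (powerSum Fq (a + b) * (sdSeq Fq u * sdSeq Fq v)) +
      partialSum ((powerSum Fq a * powerSum Fq b - powerSum Fq (a + b)) *
        (sdSeq Fq u * sdSeq Fq v)) := by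
  rw [← partialSum_add, ← partialSum_add, ← partialSum_add, sdSeq_cons, sdSeq_cons,
    partialSum_mul_partialSum]
  congr 1
  ring

lemma lowSum_eq_zsmul {k : ℕ} (hk : k ≠ 0) :
    lowSum Fq k = (if Fintype.card Fq - 1 ∣ k then -1 else 0 : ℤ) • sdSeq Fq ![k] := by
  classical
  funext e
  rw [lowSum_eq hk, FiniteField.sum_pow_units, sdSeq_singleton, Pi.smul_apply, zsmul_eq_mul,
    partialSum_apply]
  split_ifs <;> simp

variable (Fq) in
def zetaSpan (w : ℕ) : Submodule ℤ (ℕ → RatFunc Fq) :=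
  Submodule.span ℤ {F | ∃ (r : ℕ) (s : Fin r → ℕ), (∀ l, 0 < s l) ∧ ∑ l, s l = w ∧ sdSeq Fq s = F}

variable (Fq) in
def powerSumSdSpan (w : ℕ) : Submodule ℤ (ℕ → RatFunc Fq) :=
  Submodule.span ℤ
    {F | ∃ i j, 0 < i ∧ 0 < j ∧ i + j = w ∧ powerSum Fq i * sdSeq Fq ![j] = F}

lemma sdSeq_mem_zetaSpan {r w : ℕ} {s : Fin r → ℕ} (hs : ∀ l, 0 < s l) (hw : ∑ l, s l = w) :
    sdSeq Fq s ∈ zetaSpan Fq w :=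
  Submodule.subset_span ⟨r, s, hs, hw, rfl⟩

lemma partialSum_powerSum_mul_mem {k w w' : ℕ} (hk : 0 < k) {F : ℕ → RatFunc Fq}
    (hF : F ∈ zetaSpan Fq w) (hw : k + w = w') :
    partialSum (powerSum Fq k * F) ∈ zetaSpan Fq w' := by
  subst hw
  induction hF using Submodule.span_induction with
  | mem F hF =>
    obtain ⟨r, s, hs, rfl, rfl⟩ := hF
    rw [← sdSeq_cons]
    exact sdSeq_mem_zetaSpan (Fin.cases hk hs) (Fin.sum_cons k s)
  | zero => simp
  | add F G _ _ hF hG =>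
    rw [mul_add, partialSum_add]
    exact add_mem hF hG
  | smul z F _ hF =>
    rw [mul_smul_comm, partialSum_smul]
    exact Submodule.smul_mem _ z hF

lemma partialSum_mul_mem {w w' n : ℕ}
    (ih : ∀ j < w, ∀ F ∈ zetaSpan Fq j, ∀ G ∈ zetaSpan Fq w', F * G ∈ zetaSpan Fq (j + w'))
    {H G : ℕ → RatFunc Fq} (hH : H ∈ powerSumSdSpan Fq w) (hG : G ∈ zetaSpan Fq w')
    (hn : w + w' = n) : partialSum (H * G) ∈ zetaSpan Fq n := by
  subst hn
  rw [powerSumSdSpan] at hH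
  rw [zetaSpan] at hG
  have hHG : H * G ∈ Submodule.span ℤ (Set.image2 (· * ·) _ _) :=
    Submodule.mul_mem_of_mem_span_of_mem_span
      (fun s hs t ht => Submodule.subset_span (Set.mem_image2_of_mem hs ht)) hH hG
  generalize H * G = X at hHG ⊢
  induction hHG using Submodule.span_induction with
  | mem _ hgen =>
    obtain ⟨_, ⟨i, j, hi, hj, rfl, rfl⟩, _, ⟨r, s, hs, rfl, rfl⟩, rfl⟩ := hgen
    have hprod := ih j (by omega) _ (sdSeq_mem_zetaSpan (s := ![j]) (by simp [hj]) (by simp)) _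
      (sdSeq_mem_zetaSpan hs rfl)
    dsimp only
    rw [mul_assoc]
    exact partialSum_powerSum_mul_mem hi hprod (by omega)
  | zero => simp
  | add _ _ _ _ hF hG =>
    rw [partialSum_add]
    exact add_mem hF hG
  | smul z _ _ hF =>
    rw [partialSum_smul]
    exact Submodule.smul_mem _ z hF

lemma powerSum_mul_lowSum_mem {i j w : ℕ} (hi : 0 < i) (hj : 0 < j) (hw : i + j = w) :
    powerSum Fq i * lowSum Fq j ∈ powerSumSdSpan Fq w := by
  rw [lowSum_eq_zsmul hj.ne', mul_smul_comm]
  exact Submodule.smul_mem _ _ (Submodule.subset_span ⟨i, j, hi, hj, hw, rfl⟩)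

lemma mixedSum_mem_powerSumSdSpan {a b c w : ℕ} (hab : 0 < a + b) (hw : a + b + c + 1 = w) :
    mixedSum Fq a b (c + 1) ∈ powerSumSdSpan Fq w := by
  induction b generalizing a c with
  | zero =>
    rw [show mixedSum Fq a 0 (c + 1) = _ from funext (mixedSum_zero_middle a (c + 1))]
    exact powerSum_mul_lowSum_mem (by omega) (by omega) (by omega)
  | succ b ihb =>
    induction a generalizing c with
    | zero =>
      rw [show mixedSum Fq 0 (b + 1) (c + 1) = _ from funext (mixedSum_zero_left (b + 1) (c + 1))]
      exact powerSum_mul_lowSum_mem (by omega) (by omega) (by omega)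
    | succ a iha =>
      rw [show mixedSum Fq (a + 1) (b + 1) (c + 1) = _ from funext (mixedSum_succ_succ a b c)]
      exact sub_mem (ihb (by omega) (by omega)) (iha (by omega) (by omega))

lemma powerSum_mul_powerSum_sub_mem {a b : ℕ} (ha : 0 < a) (hb : 0 < b) :
    powerSum Fq a * powerSum Fq b - powerSum Fq (a + b) ∈ powerSumSdSpan Fq (a + b) := by
  obtain ⟨a, rfl⟩ : ∃ a', a = a' + 1 := ⟨a - 1, by omega⟩
  obtain ⟨b, rfl⟩ : ∃ b', b = b' + 1 := ⟨b - 1, by omega⟩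
  have hdiff : powerSum Fq (a + 1) * powerSum Fq (b + 1) - powerSum Fq (a + 1 + (b + 1)) =
      mixedSum Fq (a + 1) b 1 - mixedSum Fq a (b + 1) 1 := by
    funext e
    rw [show a + 1 + (b + 1) = a + b + 2 by ring, Pi.sub_apply, Pi.sub_apply, Pi.mul_apply]
    linear_combination powerSum_mul_powerSum (Fq := Fq) a b e
  rw [hdiff]
  exact sub_mem (mixedSum_mem_powerSumSdSpan (by omega) (by omega))
    (mixedSum_mem_powerSumSdSpan (by omega) (by omega))

lemma sdSeq_mul_sdSeq_mem {n : ℕ}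
    (ih : ∀ w₁ w₂, w₁ + w₂ < n →
      ∀ F ∈ zetaSpan Fq w₁, ∀ G ∈ zetaSpan Fq w₂, F * G ∈ zetaSpan Fq (w₁ + w₂))
    {r r' : ℕ} {s : Fin r → ℕ} {s' : Fin r' → ℕ} (hs : ∀ l, 0 < s l) (hs' : ∀ l, 0 < s' l)
    (hn : ∑ l, s l + ∑ l, s' l = n) : sdSeq Fq s * sdSeq Fq s' ∈ zetaSpan Fq n := by
  cases r with
  | zero =>
    rw [sdSeq_of_length_zero, one_mul]
    exact sdSeq_mem_zetaSpan hs' (by simpa using hn)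
  | succ r =>
  cases r' with
  | zero =>
    rw [sdSeq_of_length_zero, mul_one]
    exact sdSeq_mem_zetaSpan hs (by simpa using hn)
  | succ r' =>
  obtain ⟨a, u, rfl⟩ : ∃ a u, s = Fin.cons a u := ⟨s 0, Fin.tail s, (Fin.cons_self_tail s).symm⟩
  obtain ⟨b, v, rfl⟩ : ∃ b v, s' = Fin.cons b v :=
    ⟨s' 0, Fin.tail s', (Fin.cons_self_tail s').symm⟩
  have ha : 0 < a := hs 0
  have hb : 0 < b := hs' 0
  have hu : ∀ l, 0 < u l := fun l => hs l.succ
  have hv : ∀ l, 0 < v l := fun l => hs' l.succ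
  rw [Fin.sum_cons, Fin.sum_cons] at hn
  have huv := ih _ _ (by omega) _ (sdSeq_mem_zetaSpan hu rfl) _ (sdSeq_mem_zetaSpan hv rfl)
  rw [sdSeq_cons_mul_sdSeq_cons]
  refine add_mem (add_mem (add_mem ?_ ?_) ?_) ?_
  · exact partialSum_powerSum_mul_mem hb (ih _ _ (by omega) _
      (sdSeq_mem_zetaSpan (s := Fin.cons a u) hs (Fin.sum_cons a u)) _ (sdSeq_mem_zetaSpan hv rfl))
      (by omega)
  · exact partialSum_powerSum_mul_mem ha (ih _ _ (by omega) _ (sdSeq_mem_zetaSpan hu rfl) _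
      (sdSeq_mem_zetaSpan (s := Fin.cons b v) hs' (Fin.sum_cons b v))) (by omega)
  · exact partialSum_powerSum_mul_mem (by omega) huv (by omega)
  · exact partialSum_mul_mem (fun j hj F hF G hG => ih j _ (by omega) F hF G hG)
      (powerSum_mul_powerSum_sub_mem ha hb) huv (by omega)

theorem mul_mem_zetaSpan {w₁ w₂ : ℕ} {F G : ℕ → RatFunc Fq} (hF : F ∈ zetaSpan Fq w₁)
    (hG : G ∈ zetaSpan Fq w₂) : F * G ∈ zetaSpan Fq (w₁ + w₂) := by
  induction hn : w₁ + w₂ using Nat.strong_induction_on generalizing w₁ w₂ F G with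
  | _ n ih =>
  rw [zetaSpan] at hF hG
  refine Submodule.mul_mem_of_mem_span_of_mem_span ?_ hF hG
  rintro _ ⟨r, s, hs, rfl, rfl⟩ _ ⟨r', s', hs', rfl, rfl⟩
  exact sdSeq_mul_sdSeq_mem (fun w₁ w₂ h F hF G hG => ih _ h hF hG rfl) hs hs' hn

end TruncatedMZV

open TruncatedMZV

/-- For tuples `s ∈ ℕ^r`, `s' ∈ ℕ^{r'}` of positive integers, there exist
finitely many tuples `s_1, …, s_m` of positive integers, each of weight `wt(s) + wt(s')`,
and coefficients `f_1, …, f_m ∈ F_p` (represented as naturals `< p` cast into `F_q(θ)`,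
which has characteristic `p`), independent of `d`, such that
`S_{<d}(s)·S_{<d}(s') = Σ_i f_i S_{<d}(s_i)` for every `d ≥ 0`. -/
theorem Sd_product_Fp_combination (Fq : Type) [Field Fq] [Fintype Fq]
    (p : ℕ) (hp : p.Prime) [CharP Fq p]
    {r r' : ℕ} (s : Fin r → ℕ) (s' : Fin r' → ℕ)
    (hs : ∀ l, 0 < s l) (hs' : ∀ l, 0 < s' l) :
    ∃ (m : ℕ) (t : Fin m → Σ n : ℕ, Fin n → ℕ) (f : Fin m → ℕ),
      (∀ i l, 0 < (t i).2 l) ∧ (∀ i, f i < p) ∧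
      (∀ i, ∑ l, (t i).2 l = (∑ l, s l) + ∑ l, s' l) ∧
      ∀ d : ℕ, Sd Fq d s * Sd Fq d s' = ∑ i, (f i : RatFunc Fq) * Sd Fq d (t i).2 := by
  obtain ⟨m, z, g, hg⟩ := Submodule.mem_span_set'.1
    (mul_mem_zetaSpan (sdSeq_mem_zetaSpan (Fq := Fq) hs rfl) (sdSeq_mem_zetaSpan hs' rfl))
  choose n t ht using fun i => (g i).2
  have : CharP (RatFunc Fq) p :=
    charP_of_injective_algebraMap (algebraMap Fq (RatFunc Fq)).injective p
  have : NeZero p := ⟨hp.ne_zero⟩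
  refine ⟨m, fun i => ⟨n i, t i⟩, fun i => (z i : ZMod p).val, fun i => (ht i).1,
    fun i => ZMod.val_lt _, fun i => (ht i).2.1, fun d => ?_⟩
  have hd := congrFun hg d
  simp only [Finset.sum_apply, Pi.smul_apply, ← (ht _).2.2, Pi.mul_apply, sdSeq] at hd
  simp [← hd, ZMod.natCast_val, zsmul_eq_mul]
end
end
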